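/- arXiv:1910.12958 — 7 statements merged into one kernel-verified Lean document; each statement's English description precedes it below -/
import Mathlib

section
/- Let h: ℝ → ℝ ∪ {+∞} be a proper convex l.s.c. function such that h is non-decreasing and diverges to +∞ at +∞ along its domain in the sense that the function q ↦ ε·exp((p-q)/ε) + h(q) is coercive for every p ∈ ℝ. Then for every ε > 0 and every p ∈ ℝ, there is a unique minimizer q of the map q ↦ ε·exp((p-q)/ε) + h(q); this defines the anisotropic proximity operator aprox_h^ε(p). -/
/-!
Existence: the functional is lower semicontinuous, and coercivity confines its sublevel set at a
point of finite value to a compact set, on which a lower semicontinuous function attains its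
minimum. Uniqueness: the exponential term is strictly convex and `h` is convex, so the midpoint of
two distinct minimizers would have strictly smaller value.
-/

open Filter Topology Set

theorem LowerSemicontinuous.exists_forall_le' {α β : Type*} [TopologicalSpace α]
    [TopologicalSpace β] [LinearOrder β] {f : α → β} (hf : LowerSemicontinuous f) (x₀ : α)
    (h : ∀ᶠ x in cocompact α, f x₀ ≤ f x) : ∃ x, ∀ y, f x ≤ f y := by
  obtain ⟨K, hK, hKf⟩ := mem_cocompact.mp h
  obtain ⟨x, -, hmin⟩ :=
    (hf.lowerSemicontinuousOn _).exists_isMinOn (insert_nonempty x₀ K) (hK.insert x₀)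
  refine ⟨x, fun y => ?_⟩
  by_cases hy : y ∈ K
  · exact hmin (mem_insert_of_mem x₀ hy)
  · exact (hmin (mem_insert x₀ K)).trans (hKf hy)

theorem LowerSemicontinuous.coe_add {α : Type*} [TopologicalSpace α] {h : α → EReal}
    (hh : LowerSemicontinuous h) {g : α → ℝ} (hg : Continuous g) :
    LowerSemicontinuous fun x => (g x : EReal) + h x :=
  (continuous_coe_real_ereal.comp hg).lowerSemicontinuous.add' hh fun _ =>
    EReal.continuousAt_add (Or.inl (EReal.coe_ne_top _)) (Or.inl (EReal.coe_ne_bot _))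

theorem EReal.exists_eq_coe {x : EReal} (htop : x ≠ ⊤) (hbot : x ≠ ⊥) : ∃ a : ℝ, x = a :=
  ⟨x.toReal, (EReal.coe_toReal htop hbot).symm⟩

theorem EReal.ne_top_of_coe_add_le {a : ℝ} {x y : EReal} (hle : (a : EReal) + x ≤ y)
    (hy : y ≠ ⊤) : x ≠ ⊤ := by
  rintro rfl
  rw [EReal.coe_add_top, top_le_iff] at hle
  exact hy hle

def ERealConvex {E : Type*} [AddCommGroup E] [Module ℝ E] (h : E → EReal) : Prop :=
  ∀ x y : E, ∀ t : ℝ, 0 ≤ t → t ≤ 1 →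
    h (t • x + (1 - t) • y) ≤ (t : EReal) * h x + ((1 - t) : EReal) * h y

theorem ERealConvex.le_coe {E : Type*} [AddCommGroup E] [Module ℝ E] {h : E → EReal}
    (hh : ERealConvex h) {x y : E} {a b : ℝ} (hx : h x = a) (hy : h y = b) {t : ℝ}
    (ht₀ : 0 ≤ t) (ht₁ : t ≤ 1) :
    h (t • x + (1 - t) • y) ≤ ((t * a + (1 - t) * b : ℝ) : EReal) := by
  simpa [hx, hy] using hh x y t ht₀ ht₁

theorem strictConvexOn_mul_exp_sub_div (p : ℝ) {ε : ℝ} (hε : 0 < ε) :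
    StrictConvexOn ℝ univ fun q => ε * Real.exp ((p - q) / ε) := by
  refine ⟨convex_univ, fun x _ y _ hxy a b ha hb hab => ?_⟩
  have hne : (p - x) / ε ≠ (p - y) / ε := fun hc =>
    hxy (by linarith [(div_left_inj' hε.ne').mp hc])
  have harg : (p - (a • x + b • y)) / ε = a • ((p - x) / ε) + b • ((p - y) / ε) := by
    simp only [smul_eq_mul]
    field_simp
    linear_combination (-p) * hab
  have hexp := strictConvexOn_exp.2 (mem_univ _) (mem_univ _) hne ha hb hab
  simp only [smul_eq_mul] at hexp harg ⊢
  rw [harg]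
  nlinarith [mul_lt_mul_of_pos_left hexp hε]

theorem eq_of_forall_coe_add_le {E : Type*} [AddCommGroup E] [Module ℝ E] {g : E → ℝ}
    (hg : StrictConvexOn ℝ univ g) {h : E → EReal} (hh : ERealConvex h) (hbot : ∀ x, h x ≠ ⊥)
    {x y : E} (hfin : h x ≠ ⊤) (hx : ∀ z, (g x : EReal) + h x ≤ g z + h z)
    (hy : ∀ z, (g y : EReal) + h y ≤ g z + h z) : x = y := by
  by_contra hxy
  have hy_fin := EReal.ne_top_of_coe_add_le (hy x) (EReal.add_ne_top (EReal.coe_ne_top _) hfin)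
  obtain ⟨a, ha⟩ := EReal.exists_eq_coe hfin (hbot x)
  obtain ⟨b, hb⟩ := EReal.exists_eq_coe hy_fin (hbot y)
  have hval : g y + b = g x + a := by
    have hyx := hy x
    have hxy' := hx y
    rw [ha, hb, ← EReal.coe_add, ← EReal.coe_add] at hyx hxy'
    exact EReal.coe_injective (le_antisymm hyx hxy')
  set m : E := (1 / 2 : ℝ) • x + (1 - 1 / 2 : ℝ) • y
  have hm_h : h m ≤ (((1 / 2) * a + (1 - 1 / 2) * b : ℝ) : EReal) :=
    hh.le_coe ha hb (by norm_num) (by norm_num)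
  have hm_g : g m < (1 / 2 : ℝ) • g x + (1 - 1 / 2 : ℝ) • g y :=
    hg.2 (mem_univ x) (mem_univ y) hxy (by norm_num) (by norm_num) (by norm_num)
  have hm_lt : (g m : EReal) + h m < g x + h x :=
    calc (g m : EReal) + h m ≤ ((g m + ((1 / 2) * a + (1 - 1 / 2) * b) : ℝ) : EReal) := by
          rw [EReal.coe_add]; gcongr
      _ < ((g x + a : ℝ) : EReal) := by
          rw [EReal.coe_lt_coe_iff]; simp only [smul_eq_mul] at hm_g; linarith
      _ = g x + h x := by rw [ha, EReal.coe_add]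
  exact (hx m).not_gt hm_lt

theorem aprox_exists_unique_general (ε : ℝ) (hε : 0 < ε) (h : ℝ → EReal)
    (hproper : ∃ q, h q ≠ ⊤) (hnbot : ∀ q, h q ≠ ⊥)
    (hconv : ∀ p q : ℝ, ∀ t : ℝ, 0 ≤ t → t ≤ 1 →
      h (t * p + (1 - t) * q) ≤ (t : EReal) * h p + ((1 - t) : EReal) * h q)
    (hlsc : LowerSemicontinuous h)
    (hcoerc : ∀ p : ℝ,
      Tendsto (fun q : ℝ => ((ε * Real.exp ((p - q) / ε) : ℝ) : EReal) + h q)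
        (cocompact ℝ) (𝓝 ⊤)) :
    ∀ p : ℝ, ∃! q : ℝ, ∀ r : ℝ,
      ((ε * Real.exp ((p - q) / ε) : ℝ) : EReal) + h q ≤
        ((ε * Real.exp ((p - r) / ε) : ℝ) : EReal) + h r := by
  intro p
  obtain ⟨q₀, hq₀⟩ := hproper
  have hF₀ : ((ε * Real.exp ((p - q₀) / ε) : ℝ) : EReal) + h q₀ < ⊤ :=
    EReal.add_lt_top (EReal.coe_ne_top _) hq₀
  obtain ⟨x, hx⟩ := (hlsc.coe_add (g := fun q => ε * Real.exp ((p - q) / ε)) (by fun_prop))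
    |>.exists_forall_le' q₀ ((hcoerc p).eventually (eventually_ge_nhds hF₀))
  have hx_fin : h x ≠ ⊤ := EReal.ne_top_of_coe_add_le (hx q₀) hF₀.ne
  exact ⟨x, hx, fun y hy =>
    (eq_of_forall_coe_add_le (strictConvexOn_mul_exp_sub_div p hε) hconv hnbot hx_fin hx hy).symm⟩

/-- For a proper convex l.s.c. non-decreasing `h : ℝ → ℝ ∪ {+∞}` such that
`q ↦ ε·exp((p-q)/ε) + h(q)` is coercive for every `p`, this functional has a unique
minimizer for every `ε > 0` and `p ∈ ℝ`: this defines the anisotropic proximity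
operator `aprox_h^ε(p)`. -/
theorem aprox_exists_unique (ε : ℝ) (hε : 0 < ε) (h : ℝ → EReal)
    (hproper : ∃ q, h q ≠ ⊤) (hnbot : ∀ q, h q ≠ ⊥)
    (hconv : ∀ p q : ℝ, ∀ t : ℝ, 0 ≤ t → t ≤ 1 →
      h (t * p + (1 - t) * q) ≤ (t : EReal) * h p + ((1 - t) : EReal) * h q)
    (hlsc : LowerSemicontinuous h) (hmono : Monotone h)
    (hcoerc : ∀ p : ℝ,
      Tendsto (fun q : ℝ => ((ε * Real.exp ((p - q) / ε) : ℝ) : EReal) + h q)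
        (cocompact ℝ) (𝓝 ⊤)) :
    ∀ p : ℝ, ∃! q : ℝ, ∀ r : ℝ,
      ((ε * Real.exp ((p - q) / ε) : ℝ) : EReal) + h q ≤
        ((ε * Real.exp ((p - r) / ε) : ℝ) : EReal) + h r :=
  aprox_exists_unique_general ε hε h hproper hnbot hconv hlsc hcoerc
end

section
/- For the anisotropic proximity operator, there holds aprox_{φ*}^ε(p) = ε · aprox_{(φ/ε)*}(p/ε), where aprox without superscript denotes the operator with ε = 1 and (φ/ε)* is the Legendre conjugate of φ/ε. -/
/-! Substituting `r = ε s` and dividing by `ε` turns the objective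
`r ↦ ε exp((p - r)/ε) + φ*(r)` into `s ↦ exp(p/ε - s) + (φ/ε)*(s)`, because
`(φ/ε)*(s) = ε⁻¹ φ*(ε s)`. Multiplication by a positive real is an order automorphism of
`EReal`, so it preserves both minimizers and suprema. -/

open Filter Topology

/-- Legendre conjugate of an entropy function: `φ*(q) = sup_{p ≥ 0} (p*q - φ(p))`. -/
noncomputable def entConj (φ : ℝ → EReal) (q : ℝ) : EReal :=
  ⨆ p : {p : ℝ // 0 ≤ p}, (((p.1 * q : ℝ) : EReal) - φ p.1)

/-- An entropy function: nonnegative, convex, lower semicontinuous, `φ(1) = 0`,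
and `φ(p) = +∞` for `p < 0`. -/
def IsEntropy (φ : ℝ → EReal) : Prop :=
  (∀ p, 0 ≤ φ p) ∧ φ 1 = 0 ∧ (∀ p < (0 : ℝ), φ p = ⊤) ∧
  LowerSemicontinuous φ ∧
  (∀ p q : ℝ, ∀ t : ℝ, 0 ≤ t → t ≤ 1 →
    φ (t * p + (1 - t) * q) ≤ (t : EReal) * φ p + ((1 - t) : EReal) * φ q)

namespace EReal

lemma coe_mul_coe_mul_eq_self {a b : ℝ} (hab : a * b = 1) (x : EReal) :
    (a : EReal) * ((b : EReal) * x) = x := by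
  rw [← mul_assoc, ← coe_mul, hab, coe_one, one_mul]

noncomputable def mulPosOrderIso (c : ℝ) (hc : 0 < c) : EReal ≃o EReal :=
  Equiv.toOrderIso
    { toFun := fun x => (c : EReal) * x
      invFun := fun x => ((c⁻¹ : ℝ) : EReal) * x
      left_inv := coe_mul_coe_mul_eq_self (inv_mul_cancel₀ hc.ne')
      right_inv := coe_mul_coe_mul_eq_self (mul_inv_cancel₀ hc.ne') }
    (fun _ _ h => mul_le_mul_of_nonneg_left h (EReal.coe_nonneg.mpr hc.le))
    (fun _ _ h => mul_le_mul_of_nonneg_left h (EReal.coe_nonneg.mpr (inv_pos.mpr hc).le))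

@[simp]
lemma mulPosOrderIso_apply (c : ℝ) (hc : 0 < c) (x : EReal) :
    mulPosOrderIso c hc x = (c : EReal) * x := rfl

lemma coe_mul_add_coe (c a : ℝ) (hc : 0 ≤ c) (x : EReal) :
    (c : EReal) * ((a : EReal) + x) = ((c * a : ℝ) : EReal) + (c : EReal) * x := by
  rw [left_distrib_of_nonneg_of_ne_top (EReal.coe_nonneg.mpr hc) (coe_ne_top c), ← coe_mul]

end EReal

lemma entConj_const_mul (φ : ℝ → EReal) {c : ℝ} (hc : 0 < c) (s : ℝ) :
    entConj (fun x => (c : EReal) * φ x) s = (c : EReal) * entConj φ (s / c) := by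
  rw [entConj, entConj, ← EReal.mulPosOrderIso_apply c hc, OrderIso.map_iSup]
  refine iSup_congr fun p => ?_
  rw [EReal.mulPosOrderIso_apply,
    EReal.mul_sub_of_nonneg_of_ne_top (EReal.coe_nonneg.mpr hc.le) (EReal.coe_ne_top c),
    ← EReal.coe_mul]
  congr 2
  field_simp

lemma exp_add_entConj_inv_mul_eq (φ : ℝ → EReal) {ε : ℝ} (hε : 0 < ε) (p r : ℝ) :
    ((Real.exp (p / ε - r) : ℝ) : EReal) + entConj (fun x => ((ε⁻¹ : ℝ) : EReal) * φ x) r =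
      ((ε⁻¹ : ℝ) : EReal) *
        (((ε * Real.exp ((p - ε * r) / ε) : ℝ) : EReal) + entConj φ (ε * r)) := by
  rw [entConj_const_mul φ (inv_pos.mpr hε), div_inv_eq_mul, mul_comm r ε,
    EReal.coe_mul_add_coe _ _ (inv_pos.mpr hε).le, inv_mul_cancel_left₀ hε.ne', sub_div,
    mul_div_cancel_left₀ r hε.ne']

theorem aprox_rescale_general (φ : ℝ → EReal) (ε : ℝ) (hε : 0 < ε)
    (p q : ℝ) :
    (∀ r : ℝ,
      ((ε * Real.exp ((p - q) / ε) : ℝ) : EReal) + entConj φ q ≤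
        ((ε * Real.exp ((p - r) / ε) : ℝ) : EReal) + entConj φ r) ↔
    (∀ r : ℝ,
      ((Real.exp (p / ε - q / ε) : ℝ) : EReal)
          + entConj (fun x => ((ε⁻¹ : ℝ) : EReal) * φ x) (q / ε) ≤
        ((Real.exp (p / ε - r) : ℝ) : EReal)
          + entConj (fun x => ((ε⁻¹ : ℝ) : EReal) * φ x) r) := by
  simp only [exp_add_entConj_inv_mul_eq φ hε, mul_div_cancel₀ q hε.ne']
  rw [(mul_left_surjective₀ hε.ne').forall]
  exact forall_congr' fun r => ((EReal.mulPosOrderIso ε⁻¹ (inv_pos.mpr hε)).le_iff_le).symm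

/-- Rescaling relation `aprox_{φ*}^ε(p) = ε · aprox_{(φ/ε)*}(p/ε)`:
`q` minimizes `r ↦ ε·exp((p-r)/ε) + φ*(r)` if and only if `q/ε` minimizes
`r ↦ exp(p/ε - r) + (φ/ε)*(r)` (the `ε = 1` problem for the conjugate of `φ/ε`). -/
theorem aprox_rescale (φ : ℝ → EReal) (hφ : IsEntropy φ) (ε : ℝ) (hε : 0 < ε)
    (p q : ℝ) :
    (∀ r : ℝ,
      ((ε * Real.exp ((p - q) / ε) : ℝ) : EReal) + entConj φ q ≤
        ((ε * Real.exp ((p - r) / ε) : ℝ) : EReal) + entConj φ r) ↔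
    (∀ r : ℝ,
      ((Real.exp (p / ε - q / ε) : ℝ) : EReal)
          + entConj (fun x => ((ε⁻¹ : ℝ) : EReal) * φ x) (q / ε) ≤
        ((Real.exp (p / ε - r) : ℝ) : EReal)
          + entConj (fun x => ((ε⁻¹ : ℝ) : EReal) * φ x) r) :=
  aprox_rescale_general φ ε hε p q
end

section
/- Suppose φ* is smooth (twice continuously differentiable) with φ*' > 0 and φ*'' ≥ 0, and let g(p) = aprox_{φ*}^ε(p) be defined implicitly by φ*'(g(p)) = exp((p - g(p))/ε). Then g is differentiable with g'(p) = φ*'(g(p)) / (φ*'(g(p)) + ε·φ*''(g(p))), and in particular 0 ≤ g'(p) ≤ 1, so g is non-decreasing and 1-Lipschitz. -/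
/-!
The first-order condition `ψ'(q) = exp ((p - q) / ε)` says exactly that `p = q + ε log ψ'(q)`,
so `g` is a right inverse of `F = aproxInv ε ψ`. Since `F' = 1 + ε ψ''/ψ' ≥ 1 > 0`, `F` is a
strictly monotone bijection of `ℝ` and `g` is its (continuous) inverse; the inverse function rule
gives `g' = 1 / F'(g) = ψ'(g) / (ψ'(g) + ε ψ''(g)) ∈ [0, 1]`, and the mean value theorem turns
these derivative bounds into monotonicity and the Lipschitz bound.
-/

theorem HasDerivAt.of_rightInverse_of_pos {F F' g : ℝ → ℝ} (hF : ∀ q, HasDerivAt F (F' q) q)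
    (hF' : ∀ q, 0 < F' q) (hgF : Function.RightInverse g F) (p : ℝ) :
    HasDerivAt g (F' (g p))⁻¹ p :=
  let e := (strictMono_of_hasDerivAt_pos hF hF').orderIsoOfRightInverse F g hgF
  .of_local_left_inverse e.symm.continuous.continuousAt (hF _) (hF' _).ne' (.of_forall hgF)

theorem lipschitzWith_of_hasDerivAt_abs_le {f f' : ℝ → ℝ} {C : NNReal}
    (hf : ∀ x, HasDerivAt f (f' x) x) (bound : ∀ x, |f' x| ≤ C) : LipschitzWith C f :=
  lipschitzWith_of_nnnorm_deriv_le (fun x ↦ (hf x).differentiableAt) fun x ↦ by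
    rw [(hf x).deriv, ← NNReal.coe_le_coe, coe_nnnorm, Real.norm_eq_abs]
    exact bound x

noncomputable def aproxInv (ε : ℝ) (ψ : ℝ → ℝ) (q : ℝ) : ℝ :=
  q + ε * Real.log (deriv ψ q)

theorem aproxInv_eq_of_deriv_eq_exp {ε : ℝ} (hε : ε ≠ 0) {ψ : ℝ → ℝ} {p q : ℝ}
    (hq : deriv ψ q = Real.exp ((p - q) / ε)) : aproxInv ε ψ q = p := by
  rw [aproxInv, hq, Real.log_exp]
  field_simp
  ring

theorem hasDerivAt_aproxInv (ε : ℝ) {ψ : ℝ → ℝ} {q : ℝ} (hd : DifferentiableAt ℝ (deriv ψ) q)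
    (hq : deriv ψ q ≠ 0) :
    HasDerivAt (aproxInv ε ψ) (1 + ε * (deriv (deriv ψ) q / deriv ψ q)) q :=
  (hasDerivAt_id q).add ((hd.hasDerivAt.log hq).const_mul ε)

/-- If `ψ = φ*` is `C²` with `ψ' > 0` and `ψ'' ≥ 0`, and `g(p) = aprox_{ψ}^ε(p)`
is defined implicitly by `ψ'(g(p)) = exp((p - g(p))/ε)`, then `g` is differentiable
with `g'(p) = ψ'(g(p)) / (ψ'(g(p)) + ε·ψ''(g(p))) ∈ [0, 1]`; in particular `g` is
non-decreasing and 1-Lipschitz. -/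
theorem aprox_deriv (ε : ℝ) (hε : 0 < ε) (ψ g : ℝ → ℝ)
    (hψ : ContDiff ℝ 2 ψ)
    (hψ' : ∀ x, 0 < deriv ψ x)
    (hψ'' : ∀ x, 0 ≤ deriv (deriv ψ) x)
    (hg : ∀ p, deriv ψ (g p) = Real.exp ((p - g p) / ε)) :
    (∀ p, HasDerivAt g
        (deriv ψ (g p) / (deriv ψ (g p) + ε * deriv (deriv ψ) (g p))) p ∧
      0 ≤ deriv ψ (g p) / (deriv ψ (g p) + ε * deriv (deriv ψ) (g p)) ∧
      deriv ψ (g p) / (deriv ψ (g p) + ε * deriv (deriv ψ) (g p)) ≤ 1) ∧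
    Monotone g ∧ LipschitzWith 1 g := by
  have hF q := hasDerivAt_aproxInv ε (hψ.differentiable_deriv_two q) (hψ' q).ne'
  have hF' q : 0 < 1 + ε * (deriv (deriv ψ) q / deriv ψ q) := by
    have := hψ' q; have := hψ'' q; positivity
  have hgF : Function.RightInverse g (aproxInv ε ψ) :=
    fun p ↦ aproxInv_eq_of_deriv_eq_exp hε.ne' (hg p)
  have hg' p : HasDerivAt g
      (deriv ψ (g p) / (deriv ψ (g p) + ε * deriv (deriv ψ) (g p))) p := by
    convert HasDerivAt.of_rightInverse_of_pos hF hF' hgF p using 1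
    have := (hψ' (g p)).ne'
    field_simp
  have hbounds p : 0 ≤ deriv ψ (g p) / (deriv ψ (g p) + ε * deriv (deriv ψ) (g p)) ∧
      deriv ψ (g p) / (deriv ψ (g p) + ε * deriv (deriv ψ) (g p)) ≤ 1 := by
    have ha := hψ' (g p)
    have hεb := mul_nonneg hε.le (hψ'' (g p))
    exact ⟨by positivity, div_le_one_of_le₀ (le_add_of_nonneg_right hεb) (by positivity)⟩
  refine ⟨fun p ↦ ⟨hg' p, hbounds p⟩, monotone_of_hasDerivAt_nonneg hg' fun p ↦ (hbounds p).1,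
    lipschitzWith_of_hasDerivAt_abs_le hg' fun p ↦ ?_⟩
  rw [NNReal.coe_one, abs_le]
  exact ⟨by linarith [(hbounds p).1], (hbounds p).2⟩
end

section
/- For the Kullback-Leibler entropy φ(p) = ρ(p log p - p + 1) with ρ > 0 (and φ(0)=ρ, φ(p)=+∞ for p<0), the Legendre conjugate is φ*(q) = ρ(e^{q/ρ} - 1), and the anisotropic proximity operator is linear: aprox_{φ*}^ε(p) = (1 + ε/ρ)^{-1} p. -/
open Filter Topology

/-!
Both claims rest on the tangent-line bound `exp c * (x - c + 1) ≤ exp x`. With `c = log p` it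
is the Fenchel–Young inequality `p x ≤ p log p - p + exp x`, an equality at `p = exp x`, which
gives the conjugate. The objective `ε exp ((p - r) / ε) + ρ (exp (r / ρ) - 1)` then has both
exponents equal to `c = p / (ρ + ε)` at `r = (1 + ε / ρ)⁻¹ p`; adding the tangent bounds of the
two exponentials at `c`, weighted by `ε` and `ρ`, the linear terms cancel, and the bound at
`r / ρ` is strict unless `r` is that point.
-/

open Real

theorem exp_mul_sub_add_one_le (c x : ℝ) : exp c * (x - c + 1) ≤ exp x := by
  calc exp c * (x - c + 1) ≤ exp c * exp (x - c) := by gcongr; exact add_one_le_exp _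
    _ = exp x := by rw [← exp_add, add_sub_cancel]

theorem exp_mul_sub_add_one_lt {c x : ℝ} (h : x ≠ c) : exp c * (x - c + 1) < exp x := by
  calc exp c * (x - c + 1) < exp c * exp (x - c) := by
        gcongr; exact add_one_lt_exp (sub_ne_zero.mpr h)
    _ = exp x := by rw [← exp_add, add_sub_cancel]

theorem mul_le_mul_log_sub_add_exp {p : ℝ} (hp : 0 ≤ p) (x : ℝ) :
    p * x ≤ p * log p - p + exp x := by
  rcases hp.eq_or_lt with rfl | hp
  · simpa using (exp_pos x).le
  · have := exp_mul_sub_add_one_le (log p) x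
    rw [exp_log hp] at this
    linarith

theorem entConj_eq_coe {φ : ℝ → EReal} {f : ℝ → ℝ} {q v p₀ : ℝ}
    (hφ : ∀ p, 0 ≤ p → φ p = f p) (hle : ∀ p, 0 ≤ p → p * q - f p ≤ v)
    (hp₀ : 0 ≤ p₀) (heq : p₀ * q - f p₀ = v) : entConj φ q = v := by
  apply le_antisymm
  · refine iSup_le fun ⟨p, hp⟩ => ?_
    rw [hφ p hp, ← EReal.coe_sub]
    exact_mod_cast hle p hp
  · refine le_iSup_of_le ⟨p₀, hp₀⟩ ?_
    rw [hφ p₀ hp₀, ← EReal.coe_sub, heq]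

theorem entConj_klEntropy {ρ : ℝ} (hρ : 0 < ρ) (q : ℝ) :
    entConj (fun p => if p < 0 then ⊤ else ((ρ * (p * log p - p + 1) : ℝ) : EReal)) q
      = ((ρ * (exp (q / ρ) - 1) : ℝ) : EReal) := by
  refine entConj_eq_coe (fun p hp => if_neg hp.not_gt) (fun p hp => ?_)
    (exp_pos (q / ρ)).le ?_
  · have hfy := mul_le_mul_of_nonneg_left (mul_le_mul_log_sub_add_exp hp (q / ρ)) hρ.le
    have hq : p * q = ρ * (p * (q / ρ)) := by field_simp
    linarith
  · rw [log_exp]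
    field_simp
    ring

theorem aprox_objective_lt_of_ne {ρ ε : ℝ} (hρ : 0 < ρ) (hε : 0 < ε) {p r : ℝ}
    (hr : r ≠ (1 + ε / ρ)⁻¹ * p) :
    ε * exp ((p - (1 + ε / ρ)⁻¹ * p) / ε) + ρ * (exp ((1 + ε / ρ)⁻¹ * p / ρ) - 1)
      < ε * exp ((p - r) / ε) + ρ * (exp (r / ρ) - 1) := by
  set m := (1 + ε / ρ)⁻¹ * p
  have hpm : p = m + ε * (m / ρ) := by
    simp only [m]
    field_simp
  clear_value m
  have hsame : (p - m) / ε = m / ρ := by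
    rw [hpm]
    field_simp
    ring
  have hrm : r / ρ ≠ m / ρ := fun h => hr (by field_simp at h; exact h)
  have hleft := exp_mul_sub_add_one_le (m / ρ) ((p - r) / ε)
  have hright := exp_mul_sub_add_one_lt hrm
  rw [hsame]
  have e₁ : ε * (exp (m / ρ) * ((p - r) / ε - m / ρ + 1))
      = exp (m / ρ) * (m - r + ε) := by
    rw [hpm]
    field_simp
    ring
  have e₂ : ρ * (exp (m / ρ) * (r / ρ - m / ρ + 1))
      = exp (m / ρ) * (r - m + ρ) := by field_simp
  linarith [mul_le_mul_of_nonneg_left hleft hε.le, mul_lt_mul_of_pos_left hright hρ]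

/-- Kullback-Leibler: for `φ(p) = ρ(p log p - p + 1)` (with `φ(0) = ρ`, `φ = ∞` on
`p < 0`), the conjugate is `φ*(q) = ρ(e^{q/ρ} - 1)` and the anisotropic proximity
operator is linear: `(1 + ε/ρ)⁻¹ p` is the unique minimizer of
`q ↦ ε·exp((p-q)/ε) + φ*(q)`. -/
theorem aprox_KL (ρ ε : ℝ) (hρ : 0 < ρ) (hε : 0 < ε) :
    let φ : ℝ → EReal := fun p =>
      if p < 0 then ⊤ else ((ρ * (p * Real.log p - p + 1) : ℝ) : EReal)
    (∀ q : ℝ, entConj φ q = ((ρ * (Real.exp (q / ρ) - 1) : ℝ) : EReal)) ∧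
    ∀ p : ℝ,
      (∀ r : ℝ,
        ((ε * Real.exp ((p - (1 + ε / ρ)⁻¹ * p) / ε) : ℝ) : EReal)
            + entConj φ ((1 + ε / ρ)⁻¹ * p) ≤
          ((ε * Real.exp ((p - r) / ε) : ℝ) : EReal) + entConj φ r) ∧
      (∀ m : ℝ, (∀ r : ℝ, ((ε * Real.exp ((p - m) / ε) : ℝ) : EReal) + entConj φ m ≤
          ((ε * Real.exp ((p - r) / ε) : ℝ) : EReal) + entConj φ r) →
        m = (1 + ε / ρ)⁻¹ * p) := by
  intro φ
  have hconj : ∀ q, entConj φ q = _ := entConj_klEntropy hρ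
  refine ⟨hconj, fun p => ?_⟩
  simp only [hconj, ← EReal.coe_add, EReal.coe_le_coe_iff]
  refine ⟨fun r => ?_, fun m hm => ?_⟩
  · rcases eq_or_ne r ((1 + ε / ρ)⁻¹ * p) with rfl | hr
    · rfl
    · exact (aprox_objective_lt_of_ne hρ hε hr).le
  · by_contra hne
    exact (hm _).not_gt (aprox_objective_lt_of_ne hρ hε hne)
end

section
/- For the total variation entropy φ(p) = ρ|p-1| (ρ > 0, with φ(p)=+∞ for p<0), the Legendre conjugate is φ*(q) = max(-ρ, q) for q ≤ ρ and φ*(q) = +∞ for q > ρ, and the anisotropic proximity operator equals the clamp to [-ρ, ρ]: aprox_{φ*}^ε(p) = min(max(p, -ρ), ρ). -/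
/-!
For `p ≤ 1` the payoff `p q - ρ |p - 1|` is the convex combination `p q + (1 - p)(-ρ)`,
and for `p ≥ 1` it is `q + (p - 1)(q - ρ)`, which is bounded exactly when `q ≤ ρ`.

For the proximity operator, put `c = min (max p (-ρ)) ρ` and `s = exp ((p - c) / ε)`. Strict
convexity of `q ↦ ε exp ((p - q) / ε)` gives the strict tangent inequality at `c` with slope `-s`,
while `s` is a subgradient of `q ↦ max (-ρ) q` on `(-∞, ρ]` at `c` (`s ≤ 1` when `c = -ρ`,
`s = 1` inside, `s ≥ 1` when `c = ρ`). Together they make `c` the strict global minimizer.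
-/

open Filter Topology

open Real

noncomputable def tvEntropy (ρ : ℝ) : ℝ → EReal :=
  fun p => if p < 0 then ⊤ else ((ρ * |p - 1| : ℝ) : EReal)

section Conjugate

variable {ρ p q : ℝ}

lemma entConj_tvEntropy_eq_iSup (ρ q : ℝ) :
    entConj (tvEntropy ρ) q = ⨆ p : {p : ℝ // 0 ≤ p}, ((p.1 * q - ρ * |p.1 - 1| : ℝ) : EReal) := by
  refine iSup_congr fun p => ?_
  rw [tvEntropy, if_neg (not_lt.2 p.2), EReal.coe_sub]

lemma tv_payoff_eq_of_one_le (hp : 1 ≤ p) : p * q - ρ * |p - 1| = q + (p - 1) * (q - ρ) := by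
  rw [abs_of_nonneg (sub_nonneg.2 hp)]
  ring

lemma tv_payoff_le_max (hp : 0 ≤ p) (hq : q ≤ ρ) : p * q - ρ * |p - 1| ≤ max (-ρ) q := by
  rcases le_total p 1 with hp1 | hp1
  · calc p * q - ρ * |p - 1| = p * q + (1 - p) * -ρ := by
          rw [abs_of_nonpos (sub_nonpos.2 hp1)]; ring
      _ ≤ p * max (-ρ) q + (1 - p) * max (-ρ) q := by
          gcongr
          exacts [le_max_right _ _, le_max_left _ _]
      _ = max (-ρ) q := by ring
  · calc p * q - ρ * |p - 1| = q + (p - 1) * (q - ρ) := tv_payoff_eq_of_one_le hp1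
      _ ≤ q := by nlinarith
      _ ≤ max (-ρ) q := le_max_right _ _

lemma exists_lt_tv_payoff (hq : ρ < q) (x : ℝ) : ∃ p : ℝ, 0 ≤ p ∧ x < p * q - ρ * |p - 1| := by
  set t := (|x - q| + 1) / (q - ρ)
  have ht : 0 ≤ t := div_nonneg (by positivity) (sub_pos.2 hq).le
  refine ⟨1 + t, by linarith, ?_⟩
  rw [tv_payoff_eq_of_one_le (by linarith), add_sub_cancel_left,
    div_mul_cancel₀ _ (sub_pos.2 hq).ne']
  linarith [le_abs_self (x - q)]

lemma entConj_tvEntropy (ρ q : ℝ) :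
    entConj (tvEntropy ρ) q = if q ≤ ρ then ((max (-ρ) q : ℝ) : EReal) else ⊤ := by
  rw [entConj_tvEntropy_eq_iSup]
  split_ifs with hq
  · refine le_antisymm (iSup_le fun p => EReal.coe_le_coe_iff.2 (tv_payoff_le_max p.2 hq)) ?_
    rcases max_choice (-ρ) q with hmax | hmax <;> rw [hmax]
    · exact le_iSup_of_le ⟨0, le_rfl⟩ (by norm_num)
    · exact le_iSup_of_le ⟨1, zero_le_one⟩ (by norm_num)
  · refine (EReal.eq_top_iff_forall_lt _).2 fun x => ?_
    obtain ⟨p, hp, hx⟩ := exists_lt_tv_payoff (not_le.1 hq) x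
    exact (EReal.coe_lt_coe_iff.2 hx).trans_le (le_iSup_of_le ⟨p, hp⟩ le_rfl)

end Conjugate

section Proximity

variable {ρ ε p r : ℝ}

lemma mul_exp_div_add_tangent_lt (hε : 0 < ε) {a b : ℝ} (hab : a ≠ b) :
    ε * exp (a / ε) + exp (a / ε) * (b - a) < ε * exp (b / ε) := by
  have hsplit : exp (b / ε) = exp (a / ε) * exp ((b - a) / ε) := by
    rw [← exp_add]; congr 1; ring
  have hlin : (b - a) / ε + 1 < exp ((b - a) / ε) :=
    add_one_lt_exp (div_ne_zero (sub_ne_zero.2 hab.symm) hε.ne')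
  calc ε * exp (a / ε) + exp (a / ε) * (b - a)
      = ε * exp (a / ε) * ((b - a) / ε + 1) := by field_simp; ring
    _ < ε * exp (a / ε) * exp ((b - a) / ε) := by gcongr
    _ = ε * exp (b / ε) := by rw [hsplit]; ring

lemma neg_le_clamp (hρ : 0 ≤ ρ) : -ρ ≤ min (max p (-ρ)) ρ :=
  le_min (le_max_right _ _) (by linarith)

lemma exp_mul_sub_clamp_le (hρ : 0 ≤ ρ) (hε : 0 ≤ ε) (hr : r ≤ ρ) :
    exp ((p - min (max p (-ρ)) ρ) / ε) * (r - min (max p (-ρ)) ρ)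
      ≤ max (-ρ) r - min (max p (-ρ)) ρ := by
  rcases le_total p (-ρ) with hp | hp
  · have hc : min (max p (-ρ)) ρ = -ρ := by
      rw [max_eq_right hp, min_eq_left (by linarith)]
    have hs : exp ((p - -ρ) / ε) ≤ 1 :=
      exp_le_one_iff.2 (div_nonpos_of_nonpos_of_nonneg (by linarith) hε)
    rw [hc]
    rcases le_total r (-ρ) with hr' | hr'
    · nlinarith [exp_pos ((p - -ρ) / ε), le_max_left (-ρ) r]
    · nlinarith [le_max_right (-ρ) r]
  rcases le_total p ρ with hp' | hp'
  · rw [max_eq_left hp, min_eq_left hp', sub_self, zero_div, exp_zero, one_mul]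
    exact sub_le_sub_right (le_max_right _ _) _
  · have hc : min (max p (-ρ)) ρ = ρ := by
      rw [max_eq_left hp, min_eq_right hp']
    have hs : 1 ≤ exp ((p - ρ) / ε) := one_le_exp_iff.2 (div_nonneg (by linarith) hε)
    rw [hc]
    nlinarith [le_max_right (-ρ) r]

lemma tv_objective_clamp_lt (hρ : 0 ≤ ρ) (hε : 0 < ε) (hr : r ≤ ρ)
    (hne : r ≠ min (max p (-ρ)) ρ) :
    ε * exp ((p - min (max p (-ρ)) ρ) / ε) + min (max p (-ρ)) ρ
      < ε * exp ((p - r) / ε) + max (-ρ) r := by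
  have htangent := mul_exp_div_add_tangent_lt hε (a := p - min (max p (-ρ)) ρ) (b := p - r)
    (by contrapose! hne; linarith)
  have hsubgrad := exp_mul_sub_clamp_le (p := p) hρ hε.le hr
  linarith

lemma aprox_objective_clamp_lt (hρ : 0 ≤ ρ) (hε : 0 < ε) (hne : r ≠ min (max p (-ρ)) ρ) :
    ((ε * exp ((p - min (max p (-ρ)) ρ) / ε) : ℝ) : EReal)
        + entConj (tvEntropy ρ) (min (max p (-ρ)) ρ)
      < ((ε * exp ((p - r) / ε) : ℝ) : EReal) + entConj (tvEntropy ρ) r := by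
  rw [entConj_tvEntropy, entConj_tvEntropy, if_pos (min_le_right _ _),
    max_eq_right (neg_le_clamp hρ), ← EReal.coe_add]
  split_ifs with hr
  · exact EReal.coe_lt_coe_iff.2 (tv_objective_clamp_lt hρ hε hr hne)
  · rw [EReal.coe_add_top]
    exact EReal.coe_lt_top _

end Proximity

/-- Total variation: for `φ(p) = ρ|p-1|` (`φ = ∞` on `p < 0`), the conjugate is
`φ*(q) = max(-ρ, q)` for `q ≤ ρ` and `+∞` otherwise, and the anisotropic proximity
operator is the clamp to `[-ρ, ρ]`: `min (max p (-ρ)) ρ` is the unique minimizer of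
`q ↦ ε·exp((p-q)/ε) + φ*(q)`. -/
theorem aprox_TV (ρ ε : ℝ) (hρ : 0 < ρ) (hε : 0 < ε) :
    let φ : ℝ → EReal := fun p => if p < 0 then ⊤ else ((ρ * |p - 1| : ℝ) : EReal)
    (∀ q : ℝ, entConj φ q = if q ≤ ρ then ((max (-ρ) q : ℝ) : EReal) else ⊤) ∧
    ∀ p : ℝ,
      (∀ r : ℝ,
        ((ε * Real.exp ((p - min (max p (-ρ)) ρ) / ε) : ℝ) : EReal)
            + entConj φ (min (max p (-ρ)) ρ) ≤
          ((ε * Real.exp ((p - r) / ε) : ℝ) : EReal) + entConj φ r) ∧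
      (∀ m : ℝ, (∀ r : ℝ, ((ε * Real.exp ((p - m) / ε) : ℝ) : EReal) + entConj φ m ≤
          ((ε * Real.exp ((p - r) / ε) : ℝ) : EReal) + entConj φ r) →
        m = min (max p (-ρ)) ρ) := by
  intro φ
  refine ⟨entConj_tvEntropy ρ, fun p => ⟨fun r => ?_, fun m hm => ?_⟩⟩
  · rcases eq_or_ne r (min (max p (-ρ)) ρ) with rfl | hne
    · exact le_rfl
    · exact (aprox_objective_clamp_lt hρ.le hε hne).le
  · by_contra hne
    exact (hm _).not_gt (aprox_objective_clamp_lt hρ.le hε hne)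
end

section
/- Define z(p) = ρ(1-r) - ε(1-r)·W(Δ(p)) with Δ(p) = (ρ/ε)·exp((-p + ρ(1-r))/(ε(1-r))), where W is the Lambert W function, ρ, ε > 0 and r < 1. Then z is differentiable with z'(p) = W(Δ(p)) / (1 + W(Δ(p))), and in particular 0 ≤ z'(p) < 1: z is non-decreasing and 1-Lipschitz. -/
/-! Since `Δ' = -Δ / (ε (1 - r))`, the chain rule and `W'(x) = W(x) / (x (1 + W(x)))` give
`z' = Δ · W'(Δ) = W(Δ) / (1 + W(Δ))`, which lies in `[0, 1)` because `W ≥ 0` on `[0, ∞)`.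
The mean value theorem turns this derivative bound into monotonicity and the Lipschitz bound. -/

lemma hasDerivAt_mul_exp_neg_add_div (a b c p : ℝ) :
    HasDerivAt (fun p => a * Real.exp ((-p + b) / c))
      (-(a * Real.exp ((-p + b) / c)) / c) p := by
  have hinner : HasDerivAt (fun p : ℝ => (-p + b) / c) (-1 / c) p := by
    simpa using ((hasDerivAt_id p).neg.add_const b).div_const c
  exact (hinner.exp.const_mul a).congr_deriv (by ring)

lemma hasDerivAt_const_sub_mul_comp_lambert {W Δ : ℝ → ℝ} {c d p : ℝ} (hc : c ≠ 0)
    (hW' : ∀ x : ℝ, 0 < x → HasDerivAt W (W x / (x * (1 + W x))) x)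
    (hΔ : HasDerivAt Δ (-Δ p / c) p) (hΔpos : 0 < Δ p) :
    HasDerivAt (fun p => d - c * W (Δ p)) (W (Δ p) / (1 + W (Δ p))) p := by
  refine (((hW' _ hΔpos).comp p hΔ).const_mul c |>.const_sub d).congr_deriv ?_
  field_simp [hΔpos.ne']

lemma div_one_add_nonneg_and_lt_one {w : ℝ} (hw : 0 ≤ w) :
    0 ≤ w / (1 + w) ∧ w / (1 + w) < 1 := by
  have h : 0 < 1 + w := by linarith
  exact ⟨div_nonneg hw h.le, (div_lt_one h).2 (by linarith)⟩

lemma monotone_and_lipschitzWith_one_of_hasDerivAt {f f' : ℝ → ℝ}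
    (hf : ∀ x, HasDerivAt f (f' x) x) (h0 : ∀ x, 0 ≤ f' x) (h1 : ∀ x, f' x ≤ 1) :
    Monotone f ∧ LipschitzWith 1 f := by
  have hdiff : Differentiable ℝ f := fun x => (hf x).differentiableAt
  have hderiv : ∀ x, deriv f x = f' x := fun x => (hf x).deriv
  refine ⟨monotone_of_deriv_nonneg hdiff fun x => hderiv x ▸ h0 x,
    lipschitzWith_of_nnnorm_deriv_le hdiff fun x => ?_⟩
  rw [← NNReal.coe_le_coe, coe_nnnorm, Real.norm_eq_abs, hderiv, abs_of_nonneg (h0 x)]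
  exact h1 x

theorem aprox_power_lipschitz_general (ρ ε r : ℝ) (hρ : 0 < ρ) (hε : 0 < ε) (hr : r < 1)
    (W : ℝ → ℝ)
    (hWnonneg : ∀ x : ℝ, 0 ≤ x → 0 ≤ W x)
    (hW' : ∀ x : ℝ, 0 < x → HasDerivAt W (W x / (x * (1 + W x))) x) :
    let Δ : ℝ → ℝ := fun p => (ρ / ε) * Real.exp ((-p + ρ * (1 - r)) / (ε * (1 - r)))
    let z : ℝ → ℝ := fun p => ρ * (1 - r) - ε * (1 - r) * W (Δ p)
    (∀ p, HasDerivAt z (W (Δ p) / (1 + W (Δ p))) p ∧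
      0 ≤ W (Δ p) / (1 + W (Δ p)) ∧ W (Δ p) / (1 + W (Δ p)) < 1) ∧
    Monotone z ∧ LipschitzWith 1 z := by
  intro Δ z
  have hc : ε * (1 - r) ≠ 0 := (mul_pos hε (by linarith)).ne'
  have hΔpos : ∀ p, 0 < Δ p := fun p => mul_pos (div_pos hρ hε) (Real.exp_pos _)
  have hz' : ∀ p, HasDerivAt z (W (Δ p) / (1 + W (Δ p))) p ∧
      0 ≤ W (Δ p) / (1 + W (Δ p)) ∧ W (Δ p) / (1 + W (Δ p)) < 1 := fun p =>
    ⟨hasDerivAt_const_sub_mul_comp_lambert hc hW' (hasDerivAt_mul_exp_neg_add_div _ _ _ p)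
      (hΔpos p), div_one_add_nonneg_and_lt_one (hWnonneg _ (hΔpos p).le)⟩
  exact ⟨hz', monotone_and_lipschitzWith_one_of_hasDerivAt (fun p => (hz' p).1)
    (fun p => (hz' p).2.1) (fun p => (hz' p).2.2.le)⟩

/-- Let `z(p) = ρ(1-r) - ε(1-r)·W(Δ(p))` with `Δ(p) = (ρ/ε)·exp((-p + ρ(1-r))/(ε(1-r)))`,
where `W` is the Lambert function. Then `z` is differentiable with
`z'(p) = W(Δ(p)) / (1 + W(Δ(p))) ∈ [0, 1)`: `z` is non-decreasing and 1-Lipschitz. -/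
theorem aprox_power_lipschitz (ρ ε r : ℝ) (hρ : 0 < ρ) (hε : 0 < ε) (hr : r < 1)
    (W : ℝ → ℝ) (hW : ∀ x : ℝ, 0 ≤ x → W x * Real.exp (W x) = x)
    (hWnonneg : ∀ x : ℝ, 0 ≤ x → 0 ≤ W x)
    (hW' : ∀ x : ℝ, 0 < x → HasDerivAt W (W x / (x * (1 + W x))) x) :
    let Δ : ℝ → ℝ := fun p => (ρ / ε) * Real.exp ((-p + ρ * (1 - r)) / (ε * (1 - r)))
    let z : ℝ → ℝ := fun p => ρ * (1 - r) - ε * (1 - r) * W (Δ p)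
    (∀ p, HasDerivAt z (W (Δ p) / (1 + W (Δ p))) p ∧
      0 ≤ W (Δ p) / (1 + W (Δ p)) ∧ W (Δ p) / (1 + W (Δ p)) < 1) ∧
    Monotone z ∧ LipschitzWith 1 z :=
  aprox_power_lipschitz_general ρ ε r hρ hε hr W hWnonneg hW'
end

section
/- Let X be a compact metric space, α a finite non-zero positive Borel measure, ε > 0, and f ∈ C(X). If 0 < ε and α is a probability measure, then Smin_α(f) = -ε·log ∫ exp(-f/ε) dα converges, as ε → 0, to min_{x ∈ supp(α)} f(x), and, as ε → ∞, to ∫ f dα. -/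
/-!
As `ε → 0`, Laplace's principle: the integral `∫ exp (-f/ε) dα` is at most `exp (-m/ε)`, where
`m` is the essential infimum of `f`, and at least `α {f < b} · exp (-b/ε)` for every `b > m`; the
factor `α {f < b}` costs only `-ε log α {f < b} → 0`. For continuous `f` the essential infimum is
the minimum of `f` over the support of `α`.

As `ε → ∞`, Jensen's inequality gives `Smin_α(f) ≤ ∫ f dα`, while `exp t ≤ 1 + t + t²` for
`|t| ≤ 1` and `log y ≤ y - 1` give `Smin_α(f) ≥ ∫ f dα - M² / ε` when `|f| ≤ M ≤ ε`.
-/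

open Filter Topology MeasureTheory

/-- The Softmin operator `Smin_α(f) = -ε log ∫ exp(-f/ε) dα`. -/
noncomputable def softmin {X : Type*} [MeasurableSpace X] (ε : ℝ)
    (α : Measure X) (f : X → ℝ) : ℝ :=
  -ε * Real.log (∫ x, Real.exp (-f x / ε) ∂α)

open Real

section Softmin

variable {X : Type*} [MeasurableSpace X] {α : Measure X} {f : X → ℝ} {ε : ℝ}

lemma softmin_le_of_le_integral (hε : 0 < ε) {A : ℝ} (hA : 0 < A)
    (h : A ≤ ∫ x, exp (-f x / ε) ∂α) : softmin ε α f ≤ -ε * log A :=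
  mul_le_mul_of_nonpos_left (log_le_log hA h) (by linarith)

lemma le_softmin_of_integral_le (hε : 0 < ε) (hpos : 0 < ∫ x, exp (-f x / ε) ∂α) {B : ℝ}
    (h : ∫ x, exp (-f x / ε) ∂α ≤ B) : -ε * log B ≤ softmin ε α f :=
  mul_le_mul_of_nonpos_left (log_le_log hpos h) (by linarith)

lemma integrable_exp_neg_div_of_ae_le [IsFiniteMeasure α] (hε : 0 < ε)
    (hf : AEStronglyMeasurable f α) {m : ℝ} (hm : ∀ᵐ x ∂α, m ≤ f x) :
    Integrable (fun x => exp (-f x / ε)) α := by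
  refine Integrable.of_bound (by fun_prop) (exp (-m / ε)) ?_
  filter_upwards [hm] with x hx
  rw [norm_of_nonneg (exp_pos _).le]
  exact exp_le_exp.2 (div_le_div_of_nonneg_right (by linarith) hε.le)

lemma le_softmin_of_ae_le [IsProbabilityMeasure α] (hε : 0 < ε)
    (hf : AEStronglyMeasurable f α) {m : ℝ} (hm : ∀ᵐ x ∂α, m ≤ f x) : m ≤ softmin ε α f := by
  have hint := integrable_exp_neg_div_of_ae_le hε hf hm
  have hle : ∫ x, exp (-f x / ε) ∂α ≤ exp (-m / ε) := by
    calc ∫ x, exp (-f x / ε) ∂α ≤ ∫ _, exp (-m / ε) ∂α := by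
          refine integral_mono_ae hint (integrable_const _) ?_
          filter_upwards [hm] with x hx
          exact exp_le_exp.2 (div_le_div_of_nonneg_right (by linarith) hε.le)
      _ = exp (-m / ε) := by simp
  calc m = -ε * log (exp (-m / ε)) := by rw [log_exp]; field_simp
    _ ≤ softmin ε α f := le_softmin_of_integral_le hε (integral_exp_pos hint) hle

lemma softmin_le_of_forall_mem_le [IsFiniteMeasure α] (hε : 0 < ε)
    (hint : Integrable (fun x => exp (-f x / ε)) α) {s : Set X} (hs : MeasurableSet s)
    (hαs : 0 < α s) {b : ℝ} (hb : ∀ x ∈ s, f x ≤ b) :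
    softmin ε α f ≤ b - ε * log (α.real s) := by
  have hαs' : 0 < α.real s := ENNReal.toReal_pos hαs.ne' (measure_ne_top α s)
  have hle : α.real s * exp (-b / ε) ≤ ∫ x, exp (-f x / ε) ∂α := by
    calc α.real s * exp (-b / ε) ≤ ∫ x in s, exp (-f x / ε) ∂α := by
          refine setIntegral_ge_of_const_le hs (measure_ne_top α s) (fun x hx => ?_)
            hint.integrableOn
          exact exp_le_exp.2 (div_le_div_of_nonneg_right (by linarith [hb x hx]) hε.le)
      _ ≤ ∫ x, exp (-f x / ε) ∂α :=
          setIntegral_le_integral hint (ae_of_all _ fun x => (exp_pos _).le)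
  calc softmin ε α f ≤ -ε * log (α.real s * exp (-b / ε)) :=
        softmin_le_of_le_integral hε (by positivity) hle
    _ = b - ε * log (α.real s) := by
        rw [log_mul hαs'.ne' (exp_pos _).ne', log_exp]
        field_simp
        ring

/-- The small-temperature limit of the Softmin is the essential infimum `m` of `f`. -/
theorem tendsto_softmin_nhdsGT_zero [IsProbabilityMeasure α] (hf : Measurable f) {m : ℝ}
    (hm : ∀ᵐ x ∂α, m ≤ f x) (hpos : ∀ b, m < b → 0 < α {x | f x < b}) :
    Tendsto (fun ε => softmin ε α f) (𝓝[>] 0) (𝓝 m) := by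
  refine tendsto_order.2 ⟨fun a ha => ?_, fun a ha => ?_⟩
  · filter_upwards [self_mem_nhdsWithin] with ε hε
    exact ha.trans_le (le_softmin_of_ae_le hε hf.aestronglyMeasurable hm)
  · obtain ⟨b, hmb, hba⟩ := exists_between ha
    set s := {x | f x < b}
    have hlim : Tendsto (fun ε => b - ε * log (α.real s)) (𝓝[>] 0) (𝓝 b) := by
      have h : Tendsto (fun ε => b - ε * log (α.real s)) (𝓝 0) (𝓝 (b - 0 * log (α.real s))) :=
        (continuous_const.sub (continuous_id.mul continuous_const)).tendsto 0
      simpa using h.mono_left nhdsWithin_le_nhds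
    filter_upwards [self_mem_nhdsWithin, hlim.eventually_lt_const hba]
      with ε hε hlt
    refine (softmin_le_of_forall_mem_le hε ?_ (measurableSet_lt hf measurable_const)
      (hpos b hmb) fun x hx => le_of_lt hx).trans_lt hlt
    exact integrable_exp_neg_div_of_ae_le hε hf.aestronglyMeasurable hm

lemma softmin_le_integral [IsProbabilityMeasure α] (hε : 0 < ε) (hfi : Integrable f α)
    (hint : Integrable (fun x => exp (-f x / ε)) α) : softmin ε α f ≤ ∫ x, f x ∂α := by
  have hJensen : exp (∫ x, -f x / ε ∂α) ≤ ∫ x, exp (-f x / ε) ∂α :=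
    convexOn_exp.map_integral_le continuous_exp.continuousOn isClosed_univ
      (ae_of_all _ fun _ => trivial) (hfi.neg.div_const ε) hint
  rw [integral_div, integral_neg] at hJensen
  calc softmin ε α f ≤ -ε * log (exp (-(∫ x, f x ∂α) / ε)) :=
        softmin_le_of_le_integral hε (exp_pos _) hJensen
    _ = ∫ x, f x ∂α := by rw [log_exp]; field_simp

lemma integral_exp_neg_div_le [IsProbabilityMeasure α] (hε : 0 < ε) (hfi : Integrable f α)
    {M : ℝ} (hM : ∀ᵐ x ∂α, |f x| ≤ M) (hMε : M ≤ ε) :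
    ∫ x, exp (-f x / ε) ∂α ≤ 1 + M ^ 2 / ε ^ 2 - (∫ x, f x ∂α) / ε := by
  have hpointwise : ∀ᵐ x ∂α, exp (-f x / ε) ≤ 1 + M ^ 2 / ε ^ 2 - f x / ε := by
    filter_upwards [hM] with x hx
    have hsmall : |-f x / ε| ≤ 1 := by
      rw [abs_div, abs_neg, abs_of_pos hε, div_le_one hε]
      linarith
    have hsq : (-f x / ε) ^ 2 ≤ M ^ 2 / ε ^ 2 := by
      rw [div_pow, neg_sq, ← sq_abs]
      gcongr
    have hexp := (abs_le.1 (abs_exp_sub_one_sub_id_le hsmall)).2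
    linarith [neg_div ε (f x)]
  calc ∫ x, exp (-f x / ε) ∂α ≤ ∫ x, (1 + M ^ 2 / ε ^ 2 - f x / ε) ∂α :=
        integral_mono_ae (integrable_exp_neg_div_of_ae_le hε hfi.aestronglyMeasurable
          (hM.mono fun x hx => (abs_le.1 hx).1)) ((integrable_const _).sub (hfi.div_const ε))
          hpointwise
    _ = 1 + M ^ 2 / ε ^ 2 - (∫ x, f x ∂α) / ε := by
        rw [integral_sub (integrable_const _) (hfi.div_const ε), integral_div]
        simp

lemma integral_sub_sq_div_le_softmin [IsProbabilityMeasure α] (hε : 0 < ε)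
    (hfi : Integrable f α) {M : ℝ} (hM : ∀ᵐ x ∂α, |f x| ≤ M) (hMε : M ≤ ε) :
    ∫ x, f x ∂α - M ^ 2 / ε ≤ softmin ε α f := by
  have hint := integrable_exp_neg_div_of_ae_le hε hfi.aestronglyMeasurable
    (hM.mono fun x hx => (abs_le.1 hx).1)
  have hpos := integral_exp_pos hint
  have hle := integral_exp_neg_div_le hε hfi hM hMε
  have hlog := log_le_sub_one_of_pos (hpos.trans_le hle)
  calc ∫ x, f x ∂α - M ^ 2 / ε = -ε * (M ^ 2 / ε ^ 2 - (∫ x, f x ∂α) / ε) := by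
        field_simp
        ring
    _ ≤ -ε * log (1 + M ^ 2 / ε ^ 2 - (∫ x, f x ∂α) / ε) :=
        mul_le_mul_of_nonpos_left (by linarith) (by linarith)
    _ ≤ softmin ε α f := le_softmin_of_integral_le hε hpos hle

theorem tendsto_softmin_atTop [IsProbabilityMeasure α] (hf : AEStronglyMeasurable f α) {M : ℝ}
    (hM : ∀ᵐ x ∂α, |f x| ≤ M) :
    Tendsto (fun ε => softmin ε α f) atTop (𝓝 (∫ x, f x ∂α)) := by
  have hfi : Integrable f α := Integrable.of_bound hf M hM
  have hlower : Tendsto (fun ε => ∫ x, f x ∂α - M ^ 2 / ε) atTop (𝓝 (∫ x, f x ∂α)) := by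
    simpa using (tendsto_const_nhds (x := ∫ x, f x ∂α)).sub
      ((tendsto_const_nhds (x := M ^ 2)).div_atTop tendsto_id)
  refine tendsto_of_tendsto_of_tendsto_of_le_of_le' hlower tendsto_const_nhds ?_ ?_
  · filter_upwards [eventually_gt_atTop 0, eventually_ge_atTop M] with ε hε hMε
    exact integral_sub_sq_div_le_softmin hε hfi hM hMε
  · filter_upwards [eventually_gt_atTop 0] with ε hε
    exact softmin_le_integral hε hfi (integrable_exp_neg_div_of_ae_le hε hf
      (hM.mono fun x hx => (abs_le.1 hx).1))

end Softmin

section Support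

variable {X : Type*} [TopologicalSpace X] [HereditarilyLindelofSpace X] [MeasurableSpace X]
  {α : Measure X} {f : X → ℝ}

lemma ae_sInf_image_support_le (hbdd : BddBelow (f '' α.support)) :
    ∀ᵐ x ∂α, sInf (f '' α.support) ≤ f x := by
  filter_upwards [Measure.support_mem_ae] with x hx
  exact csInf_le hbdd (Set.mem_image_of_mem f hx)

lemma measure_lt_pos_of_sInf_image_support_lt [NeZero α] (hf : Continuous f) {b : ℝ}
    (hb : sInf (f '' α.support) < b) : 0 < α {x | f x < b} := by
  obtain ⟨_, ⟨y, hy, rfl⟩, hyb⟩ :=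
    exists_lt_of_csInf_lt ((Measure.nonempty_support (NeZero.ne α)).image f) hb
  exact (Measure.mem_support_iff_forall y).1 hy _ ((isOpen_lt hf continuous_const).mem_nhds hyb)

end Support

/-- For a probability measure `α` on a compact metric space and continuous `f`,
the Softmin interpolates between the minimum of `f` over the support of `α`
(as `ε → 0⁺`) and the mean `∫ f dα` (as `ε → ∞`). -/
theorem softmin_interpolates {X : Type*} [MetricSpace X] [CompactSpace X]
    [MeasurableSpace X] [BorelSpace X]
    (α : Measure X) [IsProbabilityMeasure α] (f : X → ℝ) (hf : Continuous f) :
    Tendsto (fun ε : ℝ => softmin ε α f) (𝓝[>] 0)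
      (𝓝 (sInf (f '' {x : X | ∀ U ∈ 𝓝 x, 0 < α U}))) ∧
    Tendsto (fun ε : ℝ => softmin ε α f) atTop (𝓝 (∫ x, f x ∂α)) := by
  have hsupport : {x : X | ∀ U ∈ 𝓝 x, 0 < α U} = α.support :=
    Set.ext fun x => (Measure.mem_support_iff_forall x).symm
  have hbdd : BddBelow (f '' α.support) :=
    (isCompact_range hf).bddBelow.mono (Set.image_subset_range _ _)
  obtain ⟨M, hM⟩ := isCompact_univ.exists_bound_of_continuousOn hf.continuousOn
  rw [hsupport]
  exact ⟨tendsto_softmin_nhdsGT_zero hf.measurable (ae_sInf_image_support_le hbdd)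
      fun _ => measure_lt_pos_of_sInf_image_support_lt hf,
    tendsto_softmin_atTop hf.aestronglyMeasurable (ae_of_all _ fun x => hM x trivial)⟩
end
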